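/- arXiv:1308.5915 — 5 statements merged into one kernel-verified Lean document; each statement's English description precedes it below -/
import Mathlib

section
/- Let A ∈ ℝ^{n×(n+1)} satisfy A·X = 0 with the upper-left (n-1)×(n-1) submatrix B invertible. Then for every 1 ≤ i ≤ n-1, X(i) = (-1)^(n-i) · ( det(C¹₋₍ₙ,ᵢ₎)/det(B) · X(n) + det(C²₋₍ₙ,ᵢ₎)/det(B) · X(n+1) ), where C¹ (resp. C²) is A with column n+1 (resp. column n) removed, and M₋₍ₙ,ᵢ₎ denotes M with row n and column i deleted. -/
open Matrix in
lemma key_det (n : ℕ) (B : Matrix (Fin (n + 1)) (Fin (n + 1)) ℝ) (c : Fin (n + 1) → ℝ)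
    (i : Fin (n + 1)) :
    (B.updateCol i c).det =
      (-1 : ℝ) ^ (n - i.val) *
        ((Matrix.of fun k (j : Fin (n + 2)) =>
            Fin.lastCases (c k) (fun m => B k m) j).submatrix id
          (Fin.succAbove i.castSucc)).det := by
  set W : Matrix (Fin (n + 1)) (Fin (n + 2)) ℝ :=
    Matrix.of fun k (j : Fin (n + 2)) => Fin.lastCases (c k) (fun m => B k m) j with hW
  set τ : Equiv.Perm (Fin (n + 1)) := Fin.revPerm * (Fin.cycleRange i.rev) * Fin.revPerm
    with hτdef
  have hτ : ∀ m : Fin (n + 1), i.castSucc.succAbove (τ m) =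
      if m = i then Fin.last (n + 1) else m.castSucc := by
    intro m
    have hτm : τ m = (i.rev.cycleRange m.rev).rev := by
      simp [hτdef, Equiv.Perm.mul_apply]
    rcases lt_trichotomy m i with hlt | heq | hgt
    · have h1 : i.rev < m.rev := Fin.rev_lt_rev.mpr hlt
      rw [if_neg hlt.ne]
      rw [hτm, Fin.cycleRange_of_gt h1, Fin.rev_rev]
      exact Fin.succAbove_of_castSucc_lt _ _ (by simpa using hlt)
    · subst heq
      rw [if_pos rfl, hτm, Fin.cycleRange_self]
      have h0 : ((0 : Fin (n + 1)).rev : ℕ) = n := by simp [Fin.val_rev]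
      rw [Fin.succAbove_of_le_castSucc]
      · ext; simp [h0]
      · rw [Fin.le_iff_val_le_val]; simp [h0]; omega
    · have hrl : m.rev < i.rev := Fin.rev_lt_rev.mpr hgt
      have higt : i.val < m.val := Fin.lt_iff_val_lt_val.mp hgt
      rw [if_neg hgt.ne']
      rw [hτm, Fin.cycleRange_of_lt hrl]
      set t : Fin (n + 1) := (m.rev + 1).rev with hts
      have hval : ((m.rev + 1 : Fin (n + 1)) : ℕ) = m.rev.val + 1 :=
        Fin.val_add_one_of_lt (lt_of_lt_of_le hrl (Fin.le_last _))
      have hv2 : (t : ℕ) = m.val - 1 := by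
        rw [hts, Fin.val_rev, hval, Fin.val_rev]; omega
      rw [Fin.succAbove_of_le_castSucc]
      · ext
        rw [Fin.val_succ, hv2, Fin.coe_castSucc]
        omega
      · have h3 := Fin.coe_castSucc t
        rw [Fin.le_iff_val_le_val, Fin.coe_castSucc, h3]
        omega
  have hM : B.updateCol i c = (W.submatrix id (Fin.succAbove i.castSucc)).submatrix id τ := by
    ext k m
    simp only [Matrix.submatrix_apply, id_eq, hτ m, Matrix.updateCol_apply]
    by_cases h : m = i
    · simp [h, hW]
    · simp [h, hW]
  have hsign : ((Equiv.Perm.sign τ : ℤ) : ℝ) = (-1 : ℝ) ^ (n - i.val) := by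
    have h1 : Equiv.Perm.sign τ = Equiv.Perm.sign (Fin.cycleRange i.rev) := by
      rw [hτdef, _root_.map_mul, _root_.map_mul]
      have : Equiv.Perm.sign (Fin.revPerm : Equiv.Perm (Fin (n + 1))) *
          Equiv.Perm.sign (Fin.revPerm : Equiv.Perm (Fin (n + 1))) = 1 := by
        rw [← _root_.map_mul]; simp
      calc _ = Equiv.Perm.sign (Fin.revPerm : Equiv.Perm (Fin (n+1))) *
            Equiv.Perm.sign (Fin.revPerm : Equiv.Perm (Fin (n+1))) *
            Equiv.Perm.sign (Fin.cycleRange i.rev) := mul_right_comm _ _ _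
        _ = _ := by rw [this, one_mul]
    rw [h1, Fin.sign_cycleRange]
    have h2 : (i.rev : ℕ) = n - i.val := by rw [Fin.val_rev]; omega
    rw [h2]
    push_cast
    rfl
  rw [hM, Matrix.det_permute', hsign]

/-- Nonsquare Cramer-type formula: for `A ∈ ℝ^{n×(n+1)}` with `A · X = 0` and
invertible upper-left `(n-1)×(n-1)` block `B`, each of the first `n-1`
coordinates of `X` is a combination of `X(n)` and `X(n+1)` with determinantal
coefficients. -/
theorem stmt_3 (n : ℕ) (A : Matrix (Fin (n + 1)) (Fin (n + 2)) ℝ) (X : Fin (n + 2) → ℝ)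
    (hAX : A.mulVec X = 0)
    (B : Matrix (Fin n) (Fin n) ℝ)
    (hB : B = A.submatrix Fin.castSucc (fun j : Fin n => j.castSucc.castSucc))
    (hBinv : IsUnit B.det)
    (C1 C2 : Matrix (Fin (n + 1)) (Fin (n + 1)) ℝ)
    (hC1 : C1 = A.submatrix id Fin.castSucc)
    (hC2 : C2 = A.submatrix id (Fin.succAbove (Fin.last n).castSucc)) :
    ∀ i : Fin n,
      X (i.castSucc.castSucc) =
        (-1 : ℝ) ^ (n - i.val) *
          ((C1.submatrix Fin.castSucc (Fin.succAbove i.castSucc)).det / B.det *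
              X ((Fin.last n).castSucc) +
            (C2.submatrix Fin.castSucc (Fin.succAbove i.castSucc)).det / B.det *
              X (Fin.last (n + 1))) := by
  intro i
  obtain ⟨m, rfl⟩ : ∃ m, n = m + 1 := ⟨n - 1, by have := i.pos; omega⟩
  have hdet : B.det ≠ 0 := isUnit_iff_ne_zero.mp hBinv
  set c : Fin (m + 1) → ℝ := fun k => A k.castSucc ((Fin.last (m + 1)).castSucc) with hc
  set d : Fin (m + 1) → ℝ := fun k => A k.castSucc (Fin.last (m + 2)) with hd
  set Xn : ℝ := X ((Fin.last (m + 1)).castSucc) with hXn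
  set Xn1 : ℝ := X (Fin.last (m + 2)) with hXn1
  set x' : Fin (m + 1) → ℝ := fun k => X k.castSucc.castSucc with hx'
  set v : Fin (m + 1) → ℝ := (-Xn) • c + (-Xn1) • d with hv
  -- Step 1 : the linear system restricted to the first m+1 rows
  have hBx : B.mulVec x' = v := by
    funext k
    have h0 := congrFun hAX k.castSucc
    simp only [Matrix.mulVec, dotProduct, Pi.zero_apply] at h0
    rw [Fin.sum_univ_castSucc] at h0
    rw [Fin.sum_univ_castSucc (f := fun j : Fin (m + 2) => A k.castSucc j.castSucc * X j.castSucc)]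
      at h0
    have hlhs : B.mulVec x' k =
        ∑ j : Fin (m + 1), A k.castSucc j.castSucc.castSucc * X j.castSucc.castSucc := by
      simp [Matrix.mulVec, dotProduct, hB, hx']
    rw [hlhs]
    simp only [hv, Pi.add_apply, Pi.smul_apply, smul_eq_mul, hc, hd, hXn, hXn1]
    linarith
  -- Step 2 : Cramer
  have hx : B.det • x' = B.adjugate.mulVec v := by
    rw [← hBx, Matrix.mulVec_mulVec, Matrix.adjugate_mul, Matrix.smul_mulVec,
      Matrix.one_mulVec]
  have hXi : B.det * x' i = (B.updateCol i v).det := by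
    have h1 := congrFun hx i
    rw [Pi.smul_apply, smul_eq_mul] at h1
    rw [h1, ← Matrix.cramer_eq_adjugate_mulVec, Matrix.cramer_apply]
  have hsplit : (B.updateCol i v).det =
      (-Xn) * (B.updateCol i c).det + (-Xn1) * (B.updateCol i d).det := by
    rw [hv, Matrix.det_updateCol_add, Matrix.det_updateCol_smul,
      Matrix.det_updateCol_smul]
  -- Step 3 : identify the two aux matrices with the C1/C2 minors
  have hC1W : (Matrix.of fun k (j : Fin (m + 2)) => Fin.lastCases (c k) (fun l => B k l) j)
      = C1.submatrix Fin.castSucc id := by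
    ext k j
    cases j using Fin.lastCases with
    | last => simp [hC1, hc]
    | cast l => simp [hC1, hB]
  have hC2W : (Matrix.of fun k (j : Fin (m + 2)) => Fin.lastCases (d k) (fun l => B k l) j)
      = C2.submatrix Fin.castSucc id := by
    ext k j
    cases j using Fin.lastCases with
    | last =>
      simp only [Matrix.of_apply, Fin.lastCases_last, Matrix.submatrix_apply, id_eq, hC2,
        Matrix.submatrix_apply]
      rw [Fin.succAbove_of_le_castSucc _ _ (le_refl _), Fin.succ_last]
    | cast l =>
      simp only [Matrix.of_apply, Fin.lastCases_castSucc, Matrix.submatrix_apply, id_eq, hC2,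
        Matrix.submatrix_apply, hB]
      rw [Fin.succAbove_of_castSucc_lt _ _
        (Fin.castSucc_lt_castSucc_iff.mpr (Fin.castSucc_lt_last l))]
  have hsub : ∀ M : Matrix (Fin (m + 2)) (Fin (m + 2)) ℝ,
      (M.submatrix Fin.castSucc id).submatrix id (Fin.succAbove i.castSucc)
        = M.submatrix Fin.castSucc (Fin.succAbove i.castSucc) := by
    intro M; rw [Matrix.submatrix_submatrix]; rfl
  have hkey1 : (B.updateCol i c).det =
      (-1 : ℝ) ^ (m - i.val) * (C1.submatrix Fin.castSucc (Fin.succAbove i.castSucc)).det := by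
    rw [key_det m B c i, hC1W, hsub]
  have hkey2 : (B.updateCol i d).det =
      (-1 : ℝ) ^ (m - i.val) * (C2.submatrix Fin.castSucc (Fin.succAbove i.castSucc)).det := by
    rw [key_det m B d i, hC2W, hsub]
  -- Step 4 : conclude
  have hpow : (-1 : ℝ) ^ (m + 1 - i.val) = -(-1 : ℝ) ^ (m - i.val) := by
    have h1 : m + 1 - i.val = (m - i.val) + 1 := by have := i.isLt; omega
    rw [h1, pow_succ]; ring
  have hXi' : B.det * X i.castSucc.castSucc =
      (-Xn) * ((-1 : ℝ) ^ (m - i.val) *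
          (C1.submatrix Fin.castSucc (Fin.succAbove i.castSucc)).det)
        + (-Xn1) * ((-1 : ℝ) ^ (m - i.val) *
          (C2.submatrix Fin.castSucc (Fin.succAbove i.castSucc)).det) := by
    rw [← hkey1, ← hkey2, ← hsplit, ← hXi]
  apply mul_left_cancel₀ hdet
  rw [hXi', hpow]
  field_simp
  ring
end

section
/- Let A be a nonnegative n×n matrix and let X₁, X₂ ≥ 0 be nonzero vectors satisfying A·X₁ ≤ (1/β₁)·X₁ and A·X₂ ≤ (1/β₂)·X₂ componentwise, with β₁, β₂ > 0. Then for every α ∈ [0,1], the componentwise product X₃ with X₃(i) = X₁(i)^α · X₂(i)^{1−α} satisfies A·X₃ ≤ (1/β₃)·X₃ where β₃ = β₁^α · β₂^{1−α}. (Log-convexity of the Collatz–Wielandt feasibility region.) -/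
/-!
Row by row, `A *ᵥ X₃` is a sum of terms `(A i j X₁ j)^α (A i j X₂ j)^(1-α)`, which Hölder's
inequality with exponents `1/α`, `1/(1-α)` bounds by `(A *ᵥ X₁) i ^ α * (A *ᵥ X₂) i ^ (1-α)`.
Feeding in the two feasibility bounds and using that the weighted geometric mean
`(u, v) ↦ u^α v^(1-α)` is monotone and multiplicative gives the threshold `β₁^α β₂^(1-α)`.
-/

open Finset Matrix

namespace Real

variable {α : ℝ}

theorem rpow_mul_rpow_one_sub_self {a : ℝ} (ha : 0 ≤ a) : a ^ α * a ^ (1 - α) = a := by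
  rw [← rpow_add' ha (by norm_num), add_sub_cancel, rpow_one]

theorem mul_rpow_mul_mul_rpow_one_sub {u v w z : ℝ} (hu : 0 ≤ u) (hv : 0 ≤ v) (hw : 0 ≤ w)
    (hz : 0 ≤ z) :
    (u * v) ^ α * (w * z) ^ (1 - α) = u ^ α * w ^ (1 - α) * (v ^ α * z ^ (1 - α)) := by
  rw [mul_rpow hu hv, mul_rpow hw hz]
  ring

theorem sum_rpow_mul_rpow_one_sub_le {ι : Type*} (s : Finset ι) {p q : ι → ℝ}
    (hp : ∀ i ∈ s, 0 ≤ p i) (hq : ∀ i ∈ s, 0 ≤ q i) (hα₀ : 0 ≤ α) (hα₁ : α ≤ 1) :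
    ∑ i ∈ s, p i ^ α * q i ^ (1 - α) ≤ (∑ i ∈ s, p i) ^ α * (∑ i ∈ s, q i) ^ (1 - α) := by
  rcases hα₀.eq_or_lt with rfl | hα₀
  · simp
  rcases hα₁.eq_or_lt with rfl | hα₁
  · simp
  have hα₁' : 0 < 1 - α := sub_pos.mpr hα₁
  have hconj : HolderConjugate α⁻¹ (1 - α)⁻¹ :=
    ⟨by simp, inv_pos.mpr hα₀, inv_pos.mpr hα₁'⟩
  have holder := inner_le_Lp_mul_Lq_of_nonneg hconj (s := s)
    (fun i hi => rpow_nonneg (hp i hi) α) (fun i hi => rpow_nonneg (hq i hi) (1 - α))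
  have hp' : ∀ i ∈ s, (p i ^ α) ^ α⁻¹ = p i := fun i hi => rpow_rpow_inv (hp i hi) hα₀.ne'
  have hq' : ∀ i ∈ s, (q i ^ (1 - α)) ^ (1 - α)⁻¹ = q i := fun i hi =>
    rpow_rpow_inv (hq i hi) hα₁'.ne'
  rwa [sum_congr rfl hp', sum_congr rfl hq', one_div, one_div, inv_inv, inv_inv] at holder

end Real

namespace Matrix

variable {m n : Type*} [Fintype n] {A : Matrix m n ℝ} {α : ℝ}

theorem mulVec_nonneg (hA : ∀ i j, 0 ≤ A i j) {x : n → ℝ} (hx : 0 ≤ x) : 0 ≤ A *ᵥ x :=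
  fun i => dotProduct_nonneg_of_nonneg (fun j => hA i j) hx

theorem mulVec_rpow_mul_rpow_one_sub_le (hA : ∀ i j, 0 ≤ A i j) {x y : n → ℝ} (hx : 0 ≤ x)
    (hy : 0 ≤ y) (hα₀ : 0 ≤ α) (hα₁ : α ≤ 1) (i : m) :
    (A *ᵥ fun j => x j ^ α * y j ^ (1 - α)) i ≤ (A *ᵥ x) i ^ α * (A *ᵥ y) i ^ (1 - α) := by
  have hterm : ∀ j, A i j * (x j ^ α * y j ^ (1 - α)) =
      (A i j * x j) ^ α * (A i j * y j) ^ (1 - α) := fun j => by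
    rw [Real.mul_rpow_mul_mul_rpow_one_sub (hA i j) (hx j) (hA i j) (hy j),
      Real.rpow_mul_rpow_one_sub_self (hA i j)]
  simp only [mulVec, dotProduct, hterm]
  exact Real.sum_rpow_mul_rpow_one_sub_le _ (fun j _ => mul_nonneg (hA i j) (hx j))
    (fun j _ => mul_nonneg (hA i j) (hy j)) hα₀ hα₁

end Matrix

theorem stmt_8_general (n : ℕ) (A : Matrix (Fin n) (Fin n) ℝ) (hA : ∀ i j, 0 ≤ A i j)
    (X₁ X₂ : Fin n → ℝ) (h₁0 : 0 ≤ X₁) (h₂0 : 0 ≤ X₂)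
    (β₁ β₂ : ℝ) (hβ₁ : 0 < β₁) (hβ₂ : 0 < β₂)
    (hf₁ : A.mulVec X₁ ≤ β₁⁻¹ • X₁) (hf₂ : A.mulVec X₂ ≤ β₂⁻¹ • X₂)
    (α : ℝ) (hα : α ∈ Set.Icc (0 : ℝ) 1) :
    A.mulVec (fun i => X₁ i ^ α * X₂ i ^ (1 - α)) ≤
      (β₁ ^ α * β₂ ^ (1 - α))⁻¹ • fun i => X₁ i ^ α * X₂ i ^ (1 - α) := by
  obtain ⟨hα₀, hα₁⟩ := hα
  intro i
  have hAX₁ : 0 ≤ (A *ᵥ X₁) i := mulVec_nonneg hA h₁0 i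
  have hAX₂ : 0 ≤ (A *ᵥ X₂) i := mulVec_nonneg hA h₂0 i
  have hX₁ : 0 ≤ X₁ i := h₁0 i
  have hX₂ : 0 ≤ X₂ i := h₂0 i
  calc (A *ᵥ fun j => X₁ j ^ α * X₂ j ^ (1 - α)) i
      ≤ (A *ᵥ X₁) i ^ α * (A *ᵥ X₂) i ^ (1 - α) :=
        mulVec_rpow_mul_rpow_one_sub_le hA h₁0 h₂0 hα₀ hα₁ i
    _ ≤ (β₁⁻¹ * X₁ i) ^ α * (β₂⁻¹ * X₂ i) ^ (1 - α) := by
        gcongr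
        · exact hf₁ i
        · exact hf₂ i
    _ = (β₁ ^ α * β₂ ^ (1 - α))⁻¹ * (X₁ i ^ α * X₂ i ^ (1 - α)) := by
        rw [Real.mul_rpow_mul_mul_rpow_one_sub (by positivity) hX₁ (by positivity) hX₂,
          Real.inv_rpow hβ₁.le, Real.inv_rpow hβ₂.le, mul_inv]

/-- Log-convexity of the Collatz–Wielandt feasibility region: componentwise
geometric means of feasible vectors are feasible for the geometric mean of
the thresholds. -/
theorem stmt_8 (n : ℕ) (A : Matrix (Fin n) (Fin n) ℝ) (hA : ∀ i j, 0 ≤ A i j)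
    (X₁ X₂ : Fin n → ℝ) (h₁0 : 0 ≤ X₁) (h₂0 : 0 ≤ X₂) (h₁ne : X₁ ≠ 0) (h₂ne : X₂ ≠ 0)
    (β₁ β₂ : ℝ) (hβ₁ : 0 < β₁) (hβ₂ : 0 < β₂)
    (hf₁ : A.mulVec X₁ ≤ β₁⁻¹ • X₁) (hf₂ : A.mulVec X₂ ≤ β₂⁻¹ • X₂)
    (α : ℝ) (hα : α ∈ Set.Icc (0 : ℝ) 1) :
    A.mulVec (fun i => X₁ i ^ α * X₂ i ^ (1 - α)) ≤
      (β₁ ^ α * β₂ ^ (1 - α))⁻¹ • fun i => X₁ i ^ α * X₂ i ^ (1 - α) :=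
  stmt_8_general n A hA X₁ X₂ h₁0 h₂0 β₁ β₂ hβ₁ hβ₂ hf₁ hf₂ α hα
end

section
/- There exist nonnegative matrices R, S ∈ ℝ^{2×3} such that the feasibility region of the generalized program is not log-convex: specifically with R = [[0,2,1],[1,0,0]] and S = [[1/2,0,0],[0,4,4]], the vectors Y₁ = (2, 1/2, 0) with β₁ = 1 and Y₂ = (4, 0, √2) with β₂ = √2 both satisfy β·R·Y ≤ S·Y componentwise, but their componentwise geometric mean Y = (√8, 0, 0) with β = 2^{1/4} does not satisfy β·R·Y ≤ S·Y. -/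
/-- The generalized (nonsquare) program is not log-convex: an explicit `2 × 3`
system with two feasible pairs whose componentwise geometric mean is
infeasible. -/
theorem stmt_9 :
    ∃ R S : Matrix (Fin 2) (Fin 3) ℝ,
      R = !![0, 2, 1; 1, 0, 0] ∧ S = !![1/2, 0, 0; 0, 4, 4] ∧
      (∀ i j, 0 ≤ R i j) ∧ (∀ i j, 0 ≤ S i j) ∧
      ∃ Y₁ Y₂ Y : Fin 3 → ℝ,
        Y₁ = ![2, 1/2, 0] ∧ Y₂ = ![4, 0, Real.sqrt 2] ∧
        Y = ![Real.sqrt 8, 0, 0] ∧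
        (∀ i, Y i = Real.sqrt (Y₁ i * Y₂ i)) ∧
        (2 : ℝ) ^ ((1 : ℝ) / 4) = Real.sqrt (1 * Real.sqrt 2) ∧
        ((1 : ℝ) • R.mulVec Y₁ ≤ S.mulVec Y₁) ∧
        (Real.sqrt 2 • R.mulVec Y₂ ≤ S.mulVec Y₂) ∧
        ¬ ((2 : ℝ) ^ ((1 : ℝ) / 4) • R.mulVec Y ≤ S.mulVec Y) := by
  have h2 : (0:ℝ) ≤ 2 := by norm_num
  have hs2 : Real.sqrt 2 * Real.sqrt 2 = 2 := Real.mul_self_sqrt h2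
  have hs2pos : 0 < Real.sqrt 2 := Real.sqrt_pos.mpr (by norm_num)
  refine ⟨_, _, rfl, rfl, ?_, ?_, ![2, 1/2, 0], ![4, 0, Real.sqrt 2], ![Real.sqrt 8, 0, 0],
    rfl, rfl, rfl, ?_, ?_, ?_, ?_, ?_⟩
  · intro i j; fin_cases i <;> fin_cases j <;> norm_num
  · intro i j; fin_cases i <;> fin_cases j <;> norm_num
  · intro i; fin_cases i
    · show Real.sqrt 8 = Real.sqrt (2 * 4); norm_num
    · simp
    · simp
  · rw [one_mul, Real.sqrt_eq_rpow, Real.sqrt_eq_rpow, ← Real.rpow_mul h2]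
    norm_num
  · intro i; fin_cases i <;>
      simp [Matrix.mulVec, dotProduct, Fin.sum_univ_three] <;> norm_num
  · intro i; fin_cases i <;>
      simp [Matrix.mulVec, dotProduct, Fin.sum_univ_three] <;> nlinarith [hs2, hs2pos]
  · intro h
    have := h 1
    simp [Matrix.mulVec, dotProduct, Fin.sum_univ_three] at this
    have h8 : 0 < Real.sqrt 8 := Real.sqrt_pos.mpr (by norm_num)
    have hp : 0 < (2:ℝ) ^ ((1:ℝ)/4) := Real.rpow_pos_of_pos (by norm_num) _
    nlinarith
end

section
/- Let g ≥ 2 be an integer and let Z₁ and Z₂ be n×n integer matrices with entries bounded in absolute value by g^{2n}. If r₁ and r₂ are real eigenvalues of Z₁ and Z₂ respectively with r₁ ≠ r₂, and r₂ is not an eigenvalue of Z₁, then |r₁ − r₂| ≥ 2^{1−n}·(n+1)^{(1−3n)/2}·g^{−4n³}. -/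
open Polynomial Matrix IntermediateField

noncomputable def Complex.abs : AbsoluteValue ℂ ℝ := NormedField.toAbsoluteValue ℂ

lemma Complex.abs_intCast (n : ℤ) : Complex.abs (n : ℂ) = |(n : ℝ)| := Complex.norm_intCast n

lemma Complex.abs_ofReal (r : ℝ) : Complex.abs (r : ℂ) = |r| := Complex.norm_real r

lemma eval_charpoly_det {n : ℕ} {K : Type*} [CommRing K] (M : Matrix (Fin n) (Fin n) K) (r : K) :
    M.charpoly.eval r = (r • (1 : Matrix (Fin n) (Fin n) K) - M).det := by
  rw [Matrix.charpoly, ← Polynomial.coe_evalRingHom, RingHom.map_det]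
  congr 1
  ext i j
  by_cases h : i = j <;>
    simp [h, Matrix.charmatrix_apply, Matrix.one_apply, Matrix.diagonal_apply]

lemma eigen_iff_root {n : ℕ} {K : Type*} [Field K] (M : Matrix (Fin n) (Fin n) K) (r : K) :
    (∃ v : Fin n → K, v ≠ 0 ∧ M.mulVec v = r • v) ↔ M.charpoly.eval r = 0 := by
  rw [eval_charpoly_det, ← Matrix.exists_mulVec_eq_zero_iff]
  constructor
  · rintro ⟨v, hv, he⟩
    exact ⟨v, hv, by rw [Matrix.sub_mulVec, Matrix.smul_mulVec, Matrix.one_mulVec, he,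
      sub_self]⟩
  · rintro ⟨v, hv, he⟩
    refine ⟨v, hv, ?_⟩
    rw [Matrix.sub_mulVec, Matrix.smul_mulVec, Matrix.one_mulVec, sub_eq_zero] at he
    exact he.symm

lemma charpoly_root_abs_le {n : ℕ} (A : Matrix (Fin n) (Fin n) ℤ) {b : ℤ}
    (hA : ∀ i j, |A i j| ≤ b) {z : ℂ}
    (hz : Polynomial.aeval z A.charpoly = 0) : Complex.abs z ≤ n * b := by
  have hz0 : (A.charpoly.map (algebraMap ℤ ℂ)).eval z = 0 := by
    rwa [Polynomial.aeval_def, ← Polynomial.eval_map] at hz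
  have hz' : ((A.map (Int.cast : ℤ → ℂ)).charpoly).eval z = 0 := by
    rw [show ((Int.cast : ℤ → ℂ)) = ⇑(algebraMap ℤ ℂ) from rfl, Matrix.charpoly_map]
    exact hz0
  obtain ⟨v, hv, he⟩ := (eigen_iff_root _ z).mpr hz'
  obtain ⟨j₀, hj₀⟩ : ∃ j, v j ≠ 0 := Function.ne_iff.mp hv
  obtain ⟨i, -, hi⟩ := Finset.exists_max_image Finset.univ (fun j => Complex.abs (v j))
    ⟨j₀, Finset.mem_univ _⟩
  have hvi : 0 < Complex.abs (v i) :=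
    lt_of_lt_of_le (by simpa using hj₀) (hi j₀ (Finset.mem_univ _))
  have hrow : (A.map (Int.cast : ℤ → ℂ)).mulVec v i = z * v i := by
    rw [he]; rfl
  have hsum : Complex.abs z * Complex.abs (v i)
      ≤ (n : ℝ) * (b : ℝ) * Complex.abs (v i) := by
    calc Complex.abs z * Complex.abs (v i) = Complex.abs (z * v i) := (map_mul _ _ _).symm
      _ = Complex.abs (∑ j, (A i j : ℂ) * v j) := by
          rw [← hrow]; rfl
      _ ≤ ∑ j, Complex.abs ((A i j : ℂ) * v j) := Complex.abs.sum_le _ _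
      _ ≤ ∑ j : Fin n, (b : ℝ) * Complex.abs (v i) := by
          refine Finset.sum_le_sum fun j _ => ?_
          rw [_root_.map_mul]
          have h1 : Complex.abs ((A i j : ℂ)) ≤ (b : ℝ) := by
            rw [Complex.abs_intCast]
            exact_mod_cast hA i j
          exact mul_le_mul h1 (hi j (Finset.mem_univ _)) (by positivity)
            (le_trans (Complex.abs.nonneg _) h1)
      _ = (n : ℝ) * (b : ℝ) * Complex.abs (v i) := by
          rw [Finset.sum_const, Finset.card_univ, Fintype.card_fin, nsmul_eq_mul]; ring
  have := le_of_mul_le_mul_right hsum hvi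
  exact_mod_cast this

lemma multiset_prod_le_pow {s : Multiset ℝ} {c : ℝ}
    (h0 : ∀ x ∈ s, 0 ≤ x) (hc : ∀ x ∈ s, x ≤ c) :
    s.prod ≤ c ^ (Multiset.card s) := by
  induction s using Multiset.induction with
  | empty => simp
  | cons a s ih =>
    have ha0 : 0 ≤ a := h0 a (Multiset.mem_cons_self a s)
    have hac : a ≤ c := hc a (Multiset.mem_cons_self a s)
    have hs0 : ∀ x ∈ s, 0 ≤ x := fun x hx => h0 x (Multiset.mem_cons_of_mem hx)
    have hsc : ∀ x ∈ s, x ≤ c := fun x hx => hc x (Multiset.mem_cons_of_mem hx)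
    rw [Multiset.prod_cons, Multiset.card_cons, pow_succ, mul_comm (c ^ Multiset.card s) c]
    exact mul_le_mul hac (ih hs0 hsc) (Multiset.prod_nonneg hs0) (le_trans ha0 hac)

lemma abs_multiset_prod (s : Multiset ℂ) :
    Complex.abs s.prod = (s.map Complex.abs).prod := by
  induction s using Multiset.induction with
  | empty => simp
  | cons a s ih => simp [ih]

lemma abs_finset_prod {ι : Type*} (s : Finset ι) (f : ι → ℂ) :
    Complex.abs (∏ i ∈ s, f i) = ∏ i ∈ s, Complex.abs (f i) := by
  induction s using Finset.cons_induction with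
  | empty => simp
  | cons a s ha ih => simp [Finset.prod_cons, ih]

set_option maxHeartbeats 2000000 in
lemma key_separation {n : ℕ} (hn : 1 ≤ n) {b : ℤ} (hb : 1 ≤ b)
    (Z₁ Z₂ : Matrix (Fin n) (Fin n) ℤ)
    (hZ₁ : ∀ i j, |Z₁ i j| ≤ b) (hZ₂ : ∀ i j, |Z₂ i j| ≤ b)
    (r₁ r₂ : ℝ)
    (hr₁ : Polynomial.aeval r₁ Z₁.charpoly = 0)
    (hr₂ : Polynomial.aeval r₂ Z₂.charpoly = 0)
    (hP₁r₂ : Polynomial.aeval r₂ Z₁.charpoly ≠ 0) :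
    1 ≤ |r₁ - r₂| * (2 * (n : ℝ) * (b : ℝ)) ^ (n ^ 2 - 1) := by
  classical
  set P₁ := Z₁.charpoly with hP₁def
  set P₂ := Z₂.charpoly with hP₂def
  have hP₁m : P₁.Monic := Z₁.charpoly_monic
  have hP₂m : P₂.Monic := Z₂.charpoly_monic
  have hd₁ : P₁.natDegree = n := by
    rw [hP₁def, Matrix.charpoly_natDegree_eq_dim, Fintype.card_fin]
  have hd₂ : P₂.natDegree = n := by
    rw [hP₂def, Matrix.charpoly_natDegree_eq_dim, Fintype.card_fin]
  -- integrality of r₂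
  have e₀ : Polynomial.eval₂ (algebraMap ℤ ℝ) r₂ P₂ = 0 := by
    rw [← Polynomial.aeval_def]; exact hr₂
  have hint : IsIntegral ℤ r₂ := ⟨P₂, hP₂m, e₀⟩
  have hintQ : IsIntegral ℚ r₂ := hint.tower_top
  haveI : FiniteDimensional ℚ ℚ⟮r₂⟯ := IntermediateField.adjoin.finiteDimensional hintQ
  set x : ℚ⟮r₂⟯ := IntermediateField.AdjoinSimple.gen ℚ r₂ with hxdef
  have hxmap : algebraMap ℚ⟮r₂⟯ ℝ x = r₂ := IntermediateField.AdjoinSimple.algebraMap_gen ℚ r₂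
  have hxint : IsIntegral ℤ x := by
    rw [← isIntegral_algebraMap_iff (algebraMap ℚ⟮r₂⟯ ℝ).injective, hxmap]
    exact hint
  set y : ℚ⟮r₂⟯ := Polynomial.aeval x P₁ with hydef
  have hymap : algebraMap ℚ⟮r₂⟯ ℝ y = Polynomial.aeval r₂ P₁ := by
    conv_rhs => rw [← hxmap]
    exact (Polynomial.aeval_algHom_apply (IsScalarTower.toAlgHom ℤ ℚ⟮r₂⟯ ℝ) x P₁).symm
  have hy0 : y ≠ 0 := by
    intro h
    exact hP₁r₂ (by rw [← hymap, h, map_zero])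
  have hyint : IsIntegral ℤ y := by
    have : y = ((Polynomial.aeval (⟨x, hxint⟩ : integralClosure ℤ ℚ⟮r₂⟯) P₁ :
        integralClosure ℤ ℚ⟮r₂⟯) : ℚ⟮r₂⟯) := by
      rw [Polynomial.aeval_subalgebra_coe]
    rw [this]
    exact (Polynomial.aeval (⟨x, hxint⟩ : integralClosure ℤ ℚ⟮r₂⟯) P₁).2
  have hNint : IsIntegral ℤ (Algebra.norm ℚ y) := Algebra.isIntegral_norm ℚ hyint
  obtain ⟨N, hN⟩ := IsIntegrallyClosed.isIntegral_iff.mp hNint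
  have hnorm0 : Algebra.norm ℚ y ≠ 0 := Algebra.norm_ne_zero_iff.mpr hy0
  have hN0 : N ≠ 0 := by
    rintro rfl
    rw [map_zero] at hN
    exact hnorm0 hN.symm
  have hprod : (algebraMap ℚ ℂ) (Algebra.norm ℚ y) = ∏ σ : ℚ⟮r₂⟯ →ₐ[ℚ] ℂ, σ y :=
    Algebra.norm_eq_prod_embeddings ℚ ℂ y
  have h1N : (1:ℝ) ≤ Complex.abs (∏ σ : ℚ⟮r₂⟯ →ₐ[ℚ] ℂ, σ y) := by
    rw [← hprod, ← hN]
    have he : ((algebraMap ℚ ℂ) ((algebraMap ℤ ℚ) N)) = ((N : ℤ) : ℂ) := by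
      push_cast
      norm_num
    rw [he, Complex.abs_intCast]
    exact_mod_cast Int.one_le_abs hN0
  set C : ℝ := 2 * (n:ℝ) * (b:ℝ) with hCdef
  have hn1 : (1:ℝ) ≤ (n:ℝ) := by exact_mod_cast hn
  have hb1 : (1:ℝ) ≤ (b:ℝ) := by exact_mod_cast hb
  have hC1 : (1:ℝ) ≤ C := by rw [hCdef]; nlinarith
  have hinjC : Function.Injective (algebraMap ℤ ℂ) := fun a b h => by
    have h' : (a:ℂ) = (b:ℂ) := h
    exact_mod_cast h'
  have hinjQ : Function.Injective (algebraMap ℤ ℚ) := fun a b h => by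
    have h' : (a:ℚ) = (b:ℚ) := h
    exact_mod_cast h'
  set Q : Polynomial ℂ := P₁.map (algebraMap ℤ ℂ) with hQdef
  have hQm : Q.Monic := hP₁m.map _
  have hQ0 : Q ≠ 0 := hQm.ne_zero
  have hQd : Q.natDegree = n := by
    rw [hQdef, Polynomial.natDegree_map_eq_of_injective hinjC]
    exact hd₁
  have hcard : Multiset.card Q.roots = n := by
    rw [← hQd]
    exact Polynomial.splits_iff_card_roots.mp (IsAlgClosed.splits Q)
  have hQeval : ∀ z : ℂ, Q.eval z = (Q.roots.map (fun α => z - α)).prod := by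
    intro z
    conv_lhs => rw [(IsAlgClosed.splits Q).eq_prod_roots_of_monic hQm]
    rw [Polynomial.eval_multiset_prod, Multiset.map_map]
    congr 1
    apply Multiset.map_congr rfl
    intro α _
    simp
  have hroot_b : ∀ α ∈ Q.roots, Complex.abs α ≤ (n:ℝ) * (b:ℝ) := by
    intro α hα
    apply charpoly_root_abs_le Z₁ hZ₁
    have h := Polynomial.isRoot_of_mem_roots hα
    rw [hQdef] at h
    rwa [Polynomial.IsRoot, Polynomial.eval_map, ← Polynomial.aeval_def] at h
  have hemb_root : ∀ σ : ℚ⟮r₂⟯ →ₐ[ℚ] ℂ, Polynomial.aeval (σ x) P₂ = 0 := by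
    intro σ
    have h1 : Polynomial.aeval (σ x) (minpoly ℚ x) = 0 := by
      rw [Polynomial.aeval_algHom_apply σ x (minpoly ℚ x), minpoly.aeval, map_zero]
    have h2 : minpoly ℚ x = minpoly ℚ r₂ := IntermediateField.minpoly_gen ℚ r₂
    have hdvd : minpoly ℚ r₂ ∣ P₂.map (algebraMap ℤ ℚ) :=
      minpoly.dvd ℚ r₂ (by rw [Polynomial.aeval_map_algebraMap]; exact hr₂)
    obtain ⟨c, hc⟩ := hdvd
    have hz : Polynomial.aeval (σ x) (P₂.map (algebraMap ℤ ℚ)) = 0 := by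
      rw [hc, _root_.map_mul, ← h2, h1, zero_mul]
    rwa [Polynomial.aeval_map_algebraMap] at hz
  have hembx : ∀ σ : ℚ⟮r₂⟯ →ₐ[ℚ] ℂ, Complex.abs (σ x) ≤ (n:ℝ)*(b:ℝ) :=
    fun σ => charpoly_root_abs_le Z₂ hZ₂ (hemb_root σ)
  have hσy : ∀ σ : ℚ⟮r₂⟯ →ₐ[ℚ] ℂ, σ y = Q.eval (σ x) := by
    intro σ
    have h := Polynomial.aeval_algHom_apply (σ.restrictScalars ℤ) x P₁
    rw [hQdef, Polynomial.eval_map, ← Polynomial.aeval_def, hydef]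
    exact h.symm
  have hQbound : ∀ β : ℂ, Complex.abs β ≤ (n:ℝ)*(b:ℝ) →
      Complex.abs (Q.eval β) ≤ C ^ n := by
    intro β hβ
    rw [hQeval β, abs_multiset_prod, Multiset.map_map]
    refine le_trans (multiset_prod_le_pow (c := C) ?_ ?_) ?_
    · intro t ht
      obtain ⟨α, hα, rfl⟩ := Multiset.mem_map.mp ht
      exact Complex.abs.nonneg _
    · intro t ht
      obtain ⟨α, hα, rfl⟩ := Multiset.mem_map.mp ht
      calc (Complex.abs ∘ fun α => β - α) α = Complex.abs (β + (-α)) := by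
            simp [sub_eq_add_neg]
        _ ≤ Complex.abs β + Complex.abs (-α) := Complex.abs.add_le _ _
        _ = Complex.abs β + Complex.abs α := by rw [Complex.abs.map_neg]
        _ ≤ (n:ℝ)*(b:ℝ) + (n:ℝ)*(b:ℝ) := add_le_add hβ (hroot_b α hα)
        _ = C := by rw [hCdef]; ring
    · rw [Multiset.card_map, hcard]
  set σ₀ : ℚ⟮r₂⟯ →ₐ[ℚ] ℂ :=
    (Complex.ofRealAm.restrictScalars ℚ).comp (IntermediateField.val ℚ⟮r₂⟯) with hσ₀def
  have hσ₀x : σ₀ x = (r₂ : ℂ) := by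
    have : ((algebraMap ℚ⟮r₂⟯ ℝ x : ℝ) : ℂ) = ((r₂ : ℝ) : ℂ) := by rw [hxmap]
    exact this
  have hr₁root : (r₁ : ℂ) ∈ Q.roots := by
    rw [Polynomial.mem_roots hQ0]
    have h := Polynomial.aeval_algHom_apply (Complex.ofRealAm.restrictScalars ℤ) r₁ P₁
    rw [Polynomial.IsRoot, hQdef, Polynomial.eval_map, ← Polynomial.aeval_def]
    have h2 : Polynomial.aeval ((r₁ : ℝ) : ℂ) P₁ =
        Complex.ofRealAm (Polynomial.aeval r₁ P₁) := h
    rw [h2, hr₁, map_zero]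
  have hm : Fintype.card (ℚ⟮r₂⟯ →ₐ[ℚ] ℂ) ≤ n := by
    rw [AlgHom.card, IntermediateField.adjoin.finrank hintQ]
    have hne : P₂.map (algebraMap ℤ ℚ) ≠ 0 := (hP₂m.map _).ne_zero
    refine le_trans (Polynomial.natDegree_le_of_dvd
      (minpoly.dvd ℚ r₂ (by rw [Polynomial.aeval_map_algebraMap]; exact hr₂)) hne) ?_
    rw [Polynomial.natDegree_map_eq_of_injective hinjQ]
    exact le_of_eq hd₂
  have hσ₀bound : Complex.abs (σ₀ y) ≤ |r₁ - r₂| * C ^ (n - 1) := by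
    rw [hσy σ₀, hσ₀x, hQeval, ← Multiset.cons_erase hr₁root, Multiset.map_cons,
      Multiset.prod_cons, Complex.abs.map_mul]
    have h1 : Complex.abs ((r₂:ℂ) - (r₁:ℂ)) = |r₁ - r₂| := by
      rw [← Complex.ofReal_sub, Complex.abs_ofReal, abs_sub_comm]
    rw [h1]
    refine mul_le_mul_of_nonneg_left ?_ (abs_nonneg _)
    rw [abs_multiset_prod, Multiset.map_map]
    refine le_trans (multiset_prod_le_pow (c := C) ?_ ?_) ?_
    · intro t ht
      obtain ⟨α, hα, rfl⟩ := Multiset.mem_map.mp ht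
      exact Complex.abs.nonneg _
    · intro t ht
      obtain ⟨α, hα, rfl⟩ := Multiset.mem_map.mp ht
      have hα' : α ∈ Q.roots := Multiset.mem_of_mem_erase hα
      calc (Complex.abs ∘ fun α => (r₂:ℂ) - α) α = Complex.abs ((r₂:ℂ) + (-α)) := by
            simp [sub_eq_add_neg]
        _ ≤ Complex.abs (r₂:ℂ) + Complex.abs (-α) := Complex.abs.add_le _ _
        _ = Complex.abs (r₂:ℂ) + Complex.abs α := by rw [Complex.abs.map_neg]
        _ ≤ (n:ℝ)*(b:ℝ) + (n:ℝ)*(b:ℝ) := by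
            refine add_le_add ?_ (hroot_b α hα')
            have : (r₂:ℂ) = σ₀ x := hσ₀x.symm
            rw [this]
            exact hembx σ₀
        _ = C := by rw [hCdef]; ring
    · rw [Multiset.card_map, Multiset.card_erase_of_mem hr₁root, hcard]
      exact le_of_eq (by rw [Nat.pred_eq_sub_one])
  have hrest : ∏ σ ∈ Finset.univ.erase σ₀, Complex.abs (σ y)
      ≤ (C^n) ^ (Fintype.card (ℚ⟮r₂⟯ →ₐ[ℚ] ℂ) - 1) := by
    calc ∏ σ ∈ Finset.univ.erase σ₀, Complex.abs (σ y)
        ≤ ∏ _σ ∈ Finset.univ.erase σ₀, C^n := by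
          refine Finset.prod_le_prod (fun σ _ => Complex.abs.nonneg _) (fun σ _ => ?_)
          rw [hσy σ]
          exact hQbound (σ x) (hembx σ)
      _ = (C^n) ^ (Finset.univ.erase σ₀).card := Finset.prod_const _
      _ = (C^n) ^ (Fintype.card (ℚ⟮r₂⟯ →ₐ[ℚ] ℂ) - 1) := by
          rw [Finset.card_erase_of_mem (Finset.mem_univ σ₀), Finset.card_univ]
  have hCn1 : (1:ℝ) ≤ C ^ n := by
    calc (1:ℝ) = 1^n := (one_pow n).symm
      _ ≤ C^n := pow_le_pow_left₀ (by norm_num) hC1 n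
  have hC0 : (0:ℝ) ≤ C := le_trans zero_le_one hC1
  have t := abs_finset_prod (Finset.univ) (fun σ : ℚ⟮r₂⟯ →ₐ[ℚ] ℂ => σ y)
  rw [t, ← Finset.mul_prod_erase Finset.univ (fun σ => Complex.abs (σ y))
    (Finset.mem_univ σ₀)] at h1N
  have h2 : Complex.abs (σ₀ y) * ∏ σ ∈ Finset.univ.erase σ₀, Complex.abs (σ y)
      ≤ (|r₁ - r₂| * C ^ (n-1)) * (C^n) ^ (Fintype.card (ℚ⟮r₂⟯ →ₐ[ℚ] ℂ) - 1) :=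
    mul_le_mul hσ₀bound hrest (Finset.prod_nonneg fun σ _ => Complex.abs.nonneg _)
      (mul_nonneg (abs_nonneg _) (pow_nonneg hC0 _))
  have h3 : (|r₁ - r₂| * C ^ (n-1)) * (C^n) ^ (Fintype.card (ℚ⟮r₂⟯ →ₐ[ℚ] ℂ) - 1)
      ≤ (|r₁ - r₂| * C ^ (n-1)) * (C^n) ^ (n - 1) :=
    mul_le_mul_of_nonneg_left (pow_le_pow_right₀ hCn1 (by omega))
      (mul_nonneg (abs_nonneg _) (pow_nonneg hC0 _))
  have h4 : (|r₁ - r₂| * C ^ (n-1)) * (C^n) ^ (n-1) = |r₁ - r₂| * C ^ (n^2-1) := by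
    rw [mul_assoc, ← pow_mul, ← pow_add]
    congr 2
    obtain ⟨k, rfl⟩ : ∃ k, n = k + 1 := ⟨n-1, by omega⟩
    have e3 : (k+1)^2 = k + (k+1)*k + 1 := by ring
    simp only [Nat.add_sub_cancel]
    omega
  rw [h4] at h3
  exact le_trans h1N (le_trans h2 h3)
set_option maxHeartbeats 1000000 in
/-- Separation of distinct real eigenvalues of integer matrices with bounded
entries (via the Bugeaud–Mignotte root-separation bound). -/
theorem stmt_11 (n : ℕ) (g : ℤ) (hg : 2 ≤ g)
    (Z₁ Z₂ : Matrix (Fin n) (Fin n) ℤ)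
    (hZ₁ : ∀ i j, |Z₁ i j| ≤ g ^ (2 * n)) (hZ₂ : ∀ i j, |Z₂ i j| ≤ g ^ (2 * n))
    (r₁ r₂ : ℝ)
    (h₁ : ∃ v : Fin n → ℝ, v ≠ 0 ∧ (Z₁.map (Int.cast : ℤ → ℝ)).mulVec v = r₁ • v)
    (h₂ : ∃ v : Fin n → ℝ, v ≠ 0 ∧ (Z₂.map (Int.cast : ℤ → ℝ)).mulVec v = r₂ • v)
    (hne : r₁ ≠ r₂)
    (hnot : ¬ ∃ v : Fin n → ℝ, v ≠ 0 ∧ (Z₁.map (Int.cast : ℤ → ℝ)).mulVec v = r₂ • v) :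
    (2 : ℝ) ^ ((1 : ℝ) - n) * ((n : ℝ) + 1) ^ (((1 : ℝ) - 3 * n) / 2) *
        (g : ℝ) ^ (-(4 : ℝ) * (n : ℝ) ^ 3) ≤ |r₁ - r₂| := by
  classical
  have hn : 1 ≤ n := by
    obtain ⟨v₁, hv₁, -⟩ := h₁
    obtain ⟨i, -⟩ := Function.ne_iff.mp hv₁
    exact i.pos
  have hg1 : (1:ℤ) ≤ g := by linarith
  have hb : (1:ℤ) ≤ g ^ (2*n) := by
    calc (1:ℤ) = 1^(2*n) := (one_pow _).symm
      _ ≤ g^(2*n) := pow_le_pow_left₀ (by norm_num) hg1 _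
  have keyiff : ∀ (Z : Matrix (Fin n) (Fin n) ℤ) (r : ℝ),
      (∃ v : Fin n → ℝ, v ≠ 0 ∧ (Z.map (Int.cast : ℤ → ℝ)).mulVec v = r • v) ↔
        Polynomial.aeval r Z.charpoly = 0 := by
    intro Z r
    rw [eigen_iff_root,
      show ((Int.cast : ℤ → ℝ)) = ⇑(algebraMap ℤ ℝ) from rfl, Matrix.charpoly_map,
      Polynomial.eval_map, ← Polynomial.aeval_def]
  have hr₁ : Polynomial.aeval r₁ Z₁.charpoly = 0 := (keyiff Z₁ r₁).mp h₁
  have hr₂ : Polynomial.aeval r₂ Z₂.charpoly = 0 := (keyiff Z₂ r₂).mp h₂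
  have hP₁r₂ : Polynomial.aeval r₂ Z₁.charpoly ≠ 0 := fun h => hnot ((keyiff Z₁ r₂).mpr h)
  have hkey := key_separation hn hb Z₁ Z₂ hZ₁ hZ₂ r₁ r₂ hr₁ hr₂ hP₁r₂
  -- arithmetic
  have hgR2 : (2:ℝ) ≤ (g:ℝ) := by exact_mod_cast hg
  have hgR1 : (1:ℝ) ≤ (g:ℝ) := by linarith
  have hgR0 : (0:ℝ) < (g:ℝ) := by linarith
  have hbcast : ((g ^ (2*n) : ℤ) : ℝ) = (g:ℝ)^(2*n) := by push_cast; ring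
  have h2n : (2*(n:ℝ)) ≤ (g:ℝ)^(2*n) := by
    have hnat : 2*n < 2^(2*n) := Nat.lt_two_pow_self
    have h1 : (2*(n:ℝ)) ≤ (2:ℝ)^(2*n) := by exact_mod_cast hnat.le
    have h2 : (2:ℝ)^(2*n) ≤ (g:ℝ)^(2*n) := pow_le_pow_left₀ (by norm_num) hgR2 _
    linarith
  have hC : 2*(n:ℝ) * ((g ^ (2*n) : ℤ) : ℝ) ≤ (g:ℝ)^(4*n) := by
    rw [hbcast]
    calc 2*(n:ℝ) * (g:ℝ)^(2*n) ≤ (g:ℝ)^(2*n) * (g:ℝ)^(2*n) := by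
          refine mul_le_mul_of_nonneg_right h2n ?_
          positivity
      _ = (g:ℝ)^(4*n) := by rw [← pow_add]; ring_nf
  have hC0 : (0:ℝ) ≤ 2*(n:ℝ) * ((g ^ (2*n) : ℤ) : ℝ) := by
    rw [hbcast]; positivity
  have hCpow : (2*(n:ℝ) * ((g ^ (2*n) : ℤ) : ℝ))^(n^2-1) ≤ (g:ℝ)^(4*n^3) := by
    calc (2*(n:ℝ) * ((g ^ (2*n) : ℤ) : ℝ))^(n^2-1) ≤ ((g:ℝ)^(4*n))^(n^2-1) :=
          pow_le_pow_left₀ hC0 hC _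
      _ = (g:ℝ)^(4*n*(n^2-1)) := by rw [← pow_mul]
      _ ≤ (g:ℝ)^(4*n^3) := by
          refine pow_le_pow_right₀ hgR1 ?_
          have h1 : n^2 - 1 ≤ n^2 := Nat.sub_le _ _
          calc 4*n*(n^2-1) ≤ 4*n*n^2 := Nat.mul_le_mul_left _ h1
            _ = 4*n^3 := by ring
  have h5 : 1 ≤ |r₁ - r₂| * (g:ℝ)^(4*n^3) := by
    refine le_trans hkey ?_
    exact mul_le_mul_of_nonneg_left hCpow (abs_nonneg _)
  have hgpow_pos : (0:ℝ) < (g:ℝ)^(4*n^3) := by positivity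
  have h6 : ((g:ℝ)^(4*n^3))⁻¹ ≤ |r₁ - r₂| := by
    rw [inv_eq_one_div, div_le_iff₀ hgpow_pos]
    linarith
  have hnR : (1:ℝ) ≤ (n:ℝ) := by exact_mod_cast hn
  have e1 : (2:ℝ) ^ ((1:ℝ) - n) ≤ 1 :=
    Real.rpow_le_one_of_one_le_of_nonpos one_le_two (by linarith)
  have e2 : ((n:ℝ)+1) ^ (((1:ℝ) - 3*n)/2) ≤ 1 :=
    Real.rpow_le_one_of_one_le_of_nonpos (by linarith)
      (div_nonpos_of_nonpos_of_nonneg (by linarith) (by norm_num))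
  have e3 : (g:ℝ) ^ (-(4:ℝ) * (n:ℝ)^3) = ((g:ℝ)^(4*n^3 : ℕ))⁻¹ := by
    rw [show (-(4:ℝ) * (n:ℝ)^3) = -(((4*n^3 : ℕ):ℝ)) by push_cast; ring,
      Real.rpow_neg (le_of_lt hgR0), ← Real.rpow_natCast]
  have p1 : (0:ℝ) ≤ (2:ℝ) ^ ((1:ℝ) - n) := Real.rpow_nonneg (by norm_num) _
  have p2 : (0:ℝ) ≤ ((n:ℝ)+1) ^ (((1:ℝ) - 3*n)/2) := Real.rpow_nonneg (by positivity) _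
  have p3 : (0:ℝ) ≤ ((g:ℝ)^(4*n^3:ℕ))⁻¹ := by positivity
  calc (2 : ℝ) ^ ((1 : ℝ) - n) * ((n : ℝ) + 1) ^ (((1 : ℝ) - 3 * n) / 2) *
        (g : ℝ) ^ (-(4 : ℝ) * (n : ℝ) ^ 3)
      = (2 : ℝ) ^ ((1 : ℝ) - n) * ((n : ℝ) + 1) ^ (((1 : ℝ) - 3 * n) / 2) *
        ((g:ℝ)^(4*n^3 : ℕ))⁻¹ := by rw [e3]
    _ ≤ 1 * 1 * ((g:ℝ)^(4*n^3 : ℕ))⁻¹ := by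
        refine mul_le_mul (mul_le_mul e1 e2 p2 (by norm_num)) (le_refl _) p3 (by norm_num)
    _ = ((g:ℝ)^(4*n^3 : ℕ))⁻¹ := by ring
    _ ≤ |r₁ - r₂| := h6
end

section
/- Let A be a nonnegative n×n matrix and let A_i denote the i-th principal (n-1)×(n-1) minor of A (delete row i and column i). If λ_p(A) is any real eigenvalue of A different from the maximal eigenvalue λ₁(A), then λ_p(A) ≤ λ₁(A_i) ≤ λ₁(A) for every i, with strict inequality λ₁(A_i) < λ₁(A) if A is irreducible. -/
/-- A square nonnegative matrix is irreducible if every entry of some power is positive. -/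
def MatIrred {n : ℕ} (M : Matrix (Fin n) (Fin n) ℝ) : Prop :=
  ∀ i j, ∃ k : ℕ, 0 < (M ^ k) i j

/-!
For `u` beyond every real eigenvalue of a nonnegative matrix `B`, the resolvent `(u - B)⁻¹` is
entrywise nonnegative, and no real eigenvalue of a principal minor `Bᵢ` exceeds the largest one
of `B`. The two facts are proved together by induction on the dimension, through the Schur
complement of the `(i, i)` entry: `det (u - B) = det (u - Bᵢ) * s(u)` with
`s(u) = u - bᵢᵢ - r ⬝ (u - Bᵢ)⁻¹ c`, where `r, c ≥ 0` are the `i`-th row and column of `B`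
without the diagonal entry.

Beyond `λ₁(Bᵢ)` the resolvent identity and `(u - Bᵢ)⁻¹ ≥ 0` make `s` strictly increasing, so
`B` has at most one eigenvalue there; this gives `λ_p ≤ λ₁(Aᵢ)`. For irreducible `A`, an
eigenvector `w ≥ 0` of `Aᵢ` padded with a zero at `i`, paired with a positive left eigenvector
of `A` for `λ₁(A)`, rules out `λ₁(Aᵢ) = λ₁(A)`. Nonnegative eigenvectors for the largest real
root `r` are columns of the adjugate of the characteristic matrix, evaluated at `r` after the
largest power of `X - r` dividing all its entries is removed.
-/

open Matrix Polynomial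

theorem Polynomial.Monic.eval_pos_of_forall_ge {p : ℝ[X]} (hp : p.Monic) {t : ℝ}
    (h : ∀ u, t ≤ u → ¬ p.IsRoot u) : 0 < p.eval t := by
  by_contra! hle
  rcases Nat.eq_zero_or_pos p.natDegree with h0 | h0
  · norm_num [eq_one_of_monic_natDegree_zero hp h0] at hle
  have htend := p.tendsto_atTop_of_leadingCoeff_nonneg (natDegree_pos_iff_degree_pos.1 h0)
    (by simp [hp.leadingCoeff])
  obtain ⟨z, hz, htz⟩ :=
    ((htend.eventually_ge_atTop 0).and (Filter.eventually_ge_atTop t)).exists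
  obtain ⟨x, hx, hx0⟩ := intermediate_value_Icc htz p.continuous.continuousOn ⟨hle, hz⟩
  exact h x hx.1 hx0

theorem le_of_forall_gt_of_continuous {f g : ℝ → ℝ} (hf : Continuous f) (hg : Continuous g)
    {s : ℝ} (h : ∀ z, s < z → f z ≤ g z) : f s ≤ g s :=
  ContinuousWithinAt.closure_le (s := Set.Ioi s) (by rw [closure_Ioi]; exact Set.self_mem_Ici)
    hf.continuousWithinAt hg.continuousWithinAt h

namespace Matrix

section Nonneg

variable {l m n o α : Type*} [Semiring α] [PartialOrder α]

def IsNonneg (M : Matrix m n α) : Prop := ∀ i j, 0 ≤ M i j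

theorem IsNonneg.submatrix {M : Matrix m n α} (hM : M.IsNonneg) (r : l → m) (c : l → n) :
    (M.submatrix r c).IsNonneg :=
  fun i j => hM (r i) (c j)

theorem IsNonneg.transpose {M : Matrix m n α} (hM : M.IsNonneg) : Mᵀ.IsNonneg :=
  fun i j => hM j i

theorem IsNonneg.fromBlocks {A : Matrix n l α} {B : Matrix n m α} {C : Matrix o l α}
    {D : Matrix o m α} (hA : A.IsNonneg) (hB : B.IsNonneg) (hC : C.IsNonneg) (hD : D.IsNonneg) :
    (fromBlocks A B C D).IsNonneg := by
  rintro (i | i) (j | j)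
  exacts [hA i j, hB i j, hC i j, hD i j]

variable [IsOrderedRing α]

theorem IsNonneg.mul [Fintype m] {M : Matrix l m α} {N : Matrix m n α} (hM : M.IsNonneg)
    (hN : N.IsNonneg) : (M * N).IsNonneg :=
  fun i j => Finset.sum_nonneg fun k _ => mul_nonneg (hM i k) (hN k j)

theorem IsNonneg.add {M N : Matrix m n α} (hM : M.IsNonneg) (hN : N.IsNonneg) :
    (M + N).IsNonneg :=
  fun i j => add_nonneg (hM i j) (hN i j)

theorem IsNonneg.pow [Fintype n] [DecidableEq n] {M : Matrix n n α} (hM : M.IsNonneg) (k : ℕ) :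
    (M ^ k).IsNonneg := by
  induction k with
  | zero => intro i j; by_cases h : i = j <;> simp [h]
  | succ k ih => rw [pow_succ]; exact ih.mul hM

theorem IsNonneg.mulVec_nonneg [Fintype n] {M : Matrix m n α} (hM : M.IsNonneg)
    {v : n → α} (hv : 0 ≤ v) : 0 ≤ M *ᵥ v :=
  fun i => Finset.sum_nonneg fun k _ => mul_nonneg (hM i k) (hv k)

theorem IsNonneg.single_le_mulVec [Fintype n] {M : Matrix m n α} (hM : M.IsNonneg) {v : n → α}
    (hv : 0 ≤ v) (i : m) (j : n) : M i j * v j ≤ (M *ᵥ v) i :=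
  Finset.single_le_sum (f := fun k => M i k * v k) (fun k _ => mul_nonneg (hM i k) (hv k))
    (Finset.mem_univ j)

end Nonneg

variable {m : ℕ}

section Field

variable {K : Type*} [Field K]

def succAboveSumEquiv (i : Fin (m + 1)) : Fin m ⊕ Unit ≃ Fin (m + 1) :=
  (Equiv.optionEquivSumPUnit (Fin m)).symm.trans (finSuccEquiv' i).symm

theorem submatrix_succAboveSumEquiv {α : Type*} (M : Matrix (Fin (m + 1)) (Fin (m + 1)) α)
    (i : Fin (m + 1)) :
    M.submatrix (succAboveSumEquiv i) (succAboveSumEquiv i) =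
      fromBlocks (M.submatrix i.succAbove i.succAbove)
        (replicateCol Unit fun p => M (i.succAbove p) i)
        (replicateRow Unit fun q => M i (i.succAbove q)) (of fun _ _ => M i i) := by
  ext (p | p) (q | q) <;> rfl

noncomputable def schurCompl (M : Matrix (Fin (m + 1)) (Fin (m + 1)) K) (i : Fin (m + 1)) : K :=
  M i i - (fun q => M i (i.succAbove q)) ⬝ᵥ
    ((M.submatrix i.succAbove i.succAbove)⁻¹ *ᵥ fun p => M (i.succAbove p) i)

theorem schurCompl_block (M : Matrix (Fin (m + 1)) (Fin (m + 1)) K) (i : Fin (m + 1)) :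
    of (fun _ _ => M i i) - replicateRow Unit (fun q => M i (i.succAbove q)) *
        (M.submatrix i.succAbove i.succAbove)⁻¹ * replicateCol Unit (fun p => M (i.succAbove p) i) =
      of fun _ _ => schurCompl M i := by
  rw [Matrix.mul_assoc, ← replicateCol_mulVec, replicateRow_mul_replicateCol]
  rfl

theorem det_eq_det_submatrix_mul_schurCompl (M : Matrix (Fin (m + 1)) (Fin (m + 1)) K)
    (i : Fin (m + 1)) (h : IsUnit (M.submatrix i.succAbove i.succAbove).det) :
    M.det = (M.submatrix i.succAbove i.succAbove).det * schurCompl M i := by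
  have := (M.submatrix i.succAbove i.succAbove).invertibleOfIsUnitDet h
  rw [← det_submatrix_equiv_self (succAboveSumEquiv i), submatrix_succAboveSumEquiv,
    det_fromBlocks₁₁, invOf_eq_nonsing_inv, schurCompl_block,
    det_unique (of fun _ _ => schurCompl M i : Matrix Unit Unit K), of_apply]

theorem submatrix_scalar_sub (B : Matrix (Fin (m + 1)) (Fin (m + 1)) K) (i : Fin (m + 1)) (u : K) :
    (scalar _ u - B).submatrix i.succAbove i.succAbove =
      scalar _ u - B.submatrix i.succAbove i.succAbove := by
  ext p q
  by_cases h : p = q <;> simp [scalar_apply, h]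

theorem charpoly_eval_eq_mul_schurCompl (B : Matrix (Fin (m + 1)) (Fin (m + 1)) K)
    (i : Fin (m + 1)) {u : K} (h : (B.submatrix i.succAbove i.succAbove).charpoly.eval u ≠ 0) :
    B.charpoly.eval u =
      (B.submatrix i.succAbove i.succAbove).charpoly.eval u * schurCompl (scalar _ u - B) i := by
  rw [eval_charpoly, det_eq_det_submatrix_mul_schurCompl _ i (by
    rwa [submatrix_scalar_sub, ← eval_charpoly, isUnit_iff_ne_zero]), submatrix_scalar_sub,
    ← eval_charpoly]

theorem schurCompl_scalar_sub (B : Matrix (Fin (m + 1)) (Fin (m + 1)) K) (i : Fin (m + 1)) (u : K) :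
    schurCompl (scalar _ u - B) i = u - B i i - (fun q => B i (i.succAbove q)) ⬝ᵥ
      ((scalar _ u - B.submatrix i.succAbove i.succAbove)⁻¹ *ᵥ fun p => B (i.succAbove p) i) := by
  have hrow : (fun q => (scalar (Fin (m + 1)) u - B) i (i.succAbove q)) =
      -fun q => B i (i.succAbove q) := by
    ext q; simp [scalar_apply]
  have hcol : (fun p => (scalar (Fin (m + 1)) u - B) (i.succAbove p) i) =
      -fun p => B (i.succAbove p) i := by
    ext p; simp [scalar_apply]
  rw [schurCompl, hrow, hcol, submatrix_scalar_sub, mulVec_neg, neg_dotProduct, dotProduct_neg,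
    neg_neg]
  simp [scalar_apply]

theorem inv_scalar_sub_sub_inv_scalar_sub {n : Type*} [Fintype n] [DecidableEq n]
    (B : Matrix n n K) {u₁ u₂ : K} (h₁ : IsUnit (scalar n u₁ - B).det)
    (h₂ : IsUnit (scalar n u₂ - B).det) :
    (scalar n u₁ - B)⁻¹ - (scalar n u₂ - B)⁻¹ =
      (u₂ - u₁) • ((scalar n u₁ - B)⁻¹ * (scalar n u₂ - B)⁻¹) := by
  have hsub : scalar n u₂ - B - (scalar n u₁ - B) = (u₂ - u₁) • 1 := by
    rw [sub_sub_sub_cancel_right, ← map_sub, scalar_apply, smul_one_eq_diagonal]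
  calc (scalar n u₁ - B)⁻¹ - (scalar n u₂ - B)⁻¹
      = (scalar n u₁ - B)⁻¹ * (scalar n u₂ - B - (scalar n u₁ - B)) * (scalar n u₂ - B)⁻¹ := by
        rw [Matrix.mul_sub, Matrix.sub_mul, Matrix.mul_assoc, mul_nonsing_inv _ h₂,
          Matrix.mul_one, nonsing_inv_mul _ h₁, Matrix.one_mul]
    _ = _ := by rw [hsub, Matrix.mul_smul, Matrix.smul_mul, Matrix.mul_one]

theorem mulVec_insertNth_zero_succAbove {R : Type*} [NonUnitalNonAssocSemiring R]
    (B : Matrix (Fin (m + 1)) (Fin (m + 1)) R) (i : Fin (m + 1)) (w : Fin m → R) (j : Fin m) :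
    (B *ᵥ Fin.insertNth i 0 w) (i.succAbove j) = (B.submatrix i.succAbove i.succAbove *ᵥ w) j := by
  simp [mulVec, dotProduct, Fin.sum_univ_succAbove _ i]

theorem exists_mulVec_eq_smul_iff_isRoot {n : Type*} [Fintype n] [DecidableEq n]
    (M : Matrix n n K) (μ : K) : (∃ v, v ≠ 0 ∧ M *ᵥ v = μ • v) ↔ M.charpoly.IsRoot μ := by
  simp only [IsRoot.def, eval_charpoly, ← exists_mulVec_eq_zero_iff,
    sub_mulVec, scalar_apply, ← smul_one_eq_diagonal, smul_mulVec, one_mulVec, sub_eq_zero,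
    eq_comm (a := M *ᵥ _)]

theorem mapMatrix_evalRingHom_charmatrix {n : Type*} [Fintype n] [DecidableEq n]
    (M : Matrix n n K) (r : K) : (evalRingHom r).mapMatrix (charmatrix M) = scalar n r - M := by
  ext p q
  rcases eq_or_ne p q with rfl | h <;> simp [scalar_apply, *]

theorem exists_eq_pow_smul_map_eval_ne_zero {n : Type*} [Fintype n] {N : Matrix n n K[X]}
    (hN : N ≠ 0) (r : K) :
    ∃ (e : ℕ) (N' : Matrix n n K[X]), N = (X - C r) ^ e • N' ∧ N'.map (eval r) ≠ 0 := by
  classical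
  obtain ⟨p₀, q₀, hpq₀⟩ : ∃ p q, N p q ≠ 0 := by
    by_contra! h
    exact hN (ext h)
  obtain ⟨pq, hpq, hmin⟩ := (Finset.univ.filter fun pq : n × n => N pq.1 pq.2 ≠ 0).exists_min_image
    (fun pq => (N pq.1 pq.2).rootMultiplicity r) ⟨(p₀, q₀), by simpa using hpq₀⟩
  rw [Finset.mem_filter] at hpq
  have hdvd : ∀ p q, (X - C r) ^ (N pq.1 pq.2).rootMultiplicity r ∣ N p q := by
    intro p q
    by_cases h : N p q = 0
    · simp [h]
    · exact (pow_dvd_pow _ (hmin (p, q) (by simpa using h))).trans (pow_rootMultiplicity_dvd _ r)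
  choose N' hN' using hdvd
  refine ⟨_, of N', ext fun p q => hN' p q, fun h0 => ?_⟩
  have hroot : X - C r ∣ N' pq.1 pq.2 :=
    dvd_iff_isRoot.2 (by simpa using congrFun (congrFun h0 pq.1) pq.2)
  have := (le_rootMultiplicity_iff hpq.2).2
    (hN' pq.1 pq.2 ▸ pow_succ (X - C r) _ ▸ mul_dvd_mul_left _ hroot)
  omega

theorem exists_adjugate_charmatrix_eq_pow_smul {n : Type*} [Fintype n] [DecidableEq n]
    (M : Matrix n n K) {r : K} (hr : M.charpoly.IsRoot r) :
    ∃ (e : ℕ) (N : Matrix n n K[X]), adjugate (charmatrix M) = (X - C r) ^ e • N ∧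
      N.map (eval r) ≠ 0 ∧ (scalar n r - M) * N.map (eval r) = 0 := by
  have : Nonempty n := by
    by_contra! h
    simp at hr
  let k := Classical.arbitrary n
  have hadj : charmatrix M * adjugate (charmatrix M) = M.charpoly • 1 := mul_adjugate _
  have hadj₀ : adjugate (charmatrix M) ≠ 0 := fun h0 => by
    have := congrFun (congrFun hadj k) k
    rw [h0, Matrix.mul_zero] at this
    exact M.charpoly_monic.ne_zero (by simpa using this.symm)
  obtain ⟨e, N, hN, hNr⟩ := exists_eq_pow_smul_map_eval_ne_zero hadj₀ r
  refine ⟨e, N, hN, hNr, ?_⟩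
  rw [hN, Matrix.mul_smul] at hadj
  set Q := (charmatrix M * N) k k
  have hQ : charmatrix M * N = Q • 1 := by
    have hX : (X - C r) ^ e ≠ 0 := pow_ne_zero e (X_sub_C_ne_zero r)
    have hQ : (X - C r) ^ e * Q = M.charpoly := by simpa using congrFun (congrFun hadj k) k
    refine Matrix.ext fun p q => mul_left_cancel₀ hX ?_
    have := congrFun (congrFun hadj p) q
    rw [smul_apply, smul_eq_mul] at this
    rw [this, smul_apply, smul_apply, smul_eq_mul, smul_eq_mul, ← mul_assoc, hQ]
  have hQr : (scalar n r - M) * N.map (eval r) = Q.eval r • 1 := by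
    have := congrArg (evalRingHom r).mapMatrix hQ
    rw [map_mul, mapMatrix_evalRingHom_charmatrix] at this
    simp only [RingHom.mapMatrix_apply, coe_evalRingHom] at this
    rw [this]
    ext p q
    rcases eq_or_ne p q with rfl | h <;> simp [*]
  have hdet := congrArg det hQr
  rw [det_mul, ← eval_charpoly, hr.eq_zero, zero_mul, det_smul, det_one, mul_one, eq_comm,
    pow_eq_zero_iff Fintype.card_ne_zero] at hdet
  rw [hQr, hdet, zero_smul]

end Field

theorem isNonneg_inv_of_schurCompl_pos {M : Matrix (Fin (m + 1)) (Fin (m + 1)) ℝ}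
    {i : Fin (m + 1)} (hAdet : IsUnit (M.submatrix i.succAbove i.succAbove).det)
    (hA : (M.submatrix i.succAbove i.succAbove)⁻¹.IsNonneg)
    (hrow : ∀ q, M i (i.succAbove q) ≤ 0) (hcol : ∀ p, M (i.succAbove p) i ≤ 0)
    (hs : 0 < schurCompl M i) : M⁻¹.IsNonneg := by
  suffices (M.submatrix (succAboveSumEquiv i) (succAboveSumEquiv i))⁻¹.IsNonneg by
    intro p q
    simpa [inv_submatrix_equiv] using
      this ((succAboveSumEquiv i).symm p) ((succAboveSumEquiv i).symm q)
  rw [submatrix_succAboveSumEquiv]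
  set A := M.submatrix i.succAbove i.succAbove
  set b := replicateCol Unit fun p => M (i.succAbove p) i
  set c := replicateRow Unit fun q => M i (i.succAbove q)
  set d : Matrix Unit Unit ℝ := of fun _ _ => M i i
  have := A.invertibleOfIsUnitDet hAdet
  have hS : d - c * ⅟A * b = of fun _ _ => schurCompl M i := by
    rw [invOf_eq_nonsing_inv]; exact schurCompl_block M i
  have : Invertible (d - c * ⅟A * b) :=
    invertibleOfIsUnitDet _ (by rw [hS, det_unique]; exact hs.ne'.isUnit)
  have := fromBlocks₁₁Invertible A b c d
  have hA' : (⅟A).IsNonneg := by rwa [invOf_eq_nonsing_inv]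
  have hT : (⅟(d - c * ⅟A * b)).IsNonneg := by
    rw [invOf_eq_nonsing_inv, hS, inv_subsingleton]
    intro _ _
    simp [hs.le]
  have hP : (⅟A * -b).IsNonneg := hA'.mul fun p _ => neg_nonneg.2 (hcol p)
  have hQ : (-c * ⅟A).IsNonneg := IsNonneg.mul (fun _ q => neg_nonneg.2 (hrow q)) hA'
  rw [← invOf_eq_nonsing_inv, invOf_fromBlocks₁₁_eq]
  have e₁ : ⅟A * b * ⅟(d - c * ⅟A * b) * c * ⅟A = ⅟A * -b * ⅟(d - c * ⅟A * b) * (-c * ⅟A) := by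
    simp only [Matrix.mul_neg, Matrix.neg_mul, neg_neg, Matrix.mul_assoc]
  have e₂ : -(⅟A * b * ⅟(d - c * ⅟A * b)) = ⅟A * -b * ⅟(d - c * ⅟A * b) := by
    simp only [Matrix.mul_neg, Matrix.neg_mul]
  have e₃ : -(⅟(d - c * ⅟A * b) * c * ⅟A) = ⅟(d - c * ⅟A * b) * (-c * ⅟A) := by
    simp only [Matrix.mul_neg, Matrix.neg_mul, Matrix.mul_assoc]
  rw [e₁, e₂, e₃]
  exact (hA'.add ((hP.mul hT).mul hQ)).fromBlocks (hP.mul hT) (hT.mul hQ) hT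

theorem schurCompl_scalar_sub_le {B : Matrix (Fin (m + 1)) (Fin (m + 1)) ℝ} (hB : B.IsNonneg)
    {i : Fin (m + 1)} {u : ℝ}
    (hres : (scalar (Fin m) u - B.submatrix i.succAbove i.succAbove)⁻¹.IsNonneg) :
    schurCompl (scalar _ u - B) i ≤ u - B i i := by
  rw [schurCompl_scalar_sub, sub_le_self_iff]
  exact dotProduct_nonneg_of_nonneg (fun q => hB _ _) (hres.mulVec_nonneg fun p => hB _ _)

theorem charpoly_eval_nonpos_of_isGreatest_submatrix {B : Matrix (Fin (m + 1)) (Fin (m + 1)) ℝ}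
    (hB : B.IsNonneg) {i : Fin (m + 1)} {s : ℝ}
    (hs : IsGreatest {x | (B.submatrix i.succAbove i.succAbove).charpoly.IsRoot x} s)
    (hres : ∀ z, s < z → (scalar (Fin m) z - B.submatrix i.succAbove i.succAbove)⁻¹.IsNonneg) :
    B.charpoly.eval s ≤ 0 := by
  set C := B.submatrix i.succAbove i.succAbove
  have key : ∀ z, s < z → B.charpoly.eval z ≤ C.charpoly.eval z * (z - B i i) := by
    intro z hz
    have hCz : 0 < C.charpoly.eval z :=
      C.charpoly_monic.eval_pos_of_forall_ge fun y hy hy₀ => (hz.trans_le hy).not_ge (hs.2 hy₀)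
    rw [charpoly_eval_eq_mul_schurCompl B i hCz.ne']
    exact mul_le_mul_of_nonneg_left (schurCompl_scalar_sub_le hB (hres z hz)) hCz.le
  have := le_of_forall_gt_of_continuous B.charpoly.continuous
    (C.charpoly.continuous.mul (continuous_id.sub continuous_const)) key
  simpa [hs.1.eq_zero] using this

theorem forall_ge_not_isRoot_submatrix_of_isNonneg_inv
    {B : Matrix (Fin (m + 1)) (Fin (m + 1)) ℝ}
    (hB : B.IsNonneg) (i : Fin (m + 1))
    (hres : ∀ z, (∀ y, z ≤ y → ¬ (B.submatrix i.succAbove i.succAbove).charpoly.IsRoot y) →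
      (scalar (Fin m) z - B.submatrix i.succAbove i.succAbove)⁻¹.IsNonneg)
    {t : ℝ} (h : ∀ z, t ≤ z → ¬ B.charpoly.IsRoot z) :
    ∀ z, t ≤ z → ¬ (B.submatrix i.succAbove i.succAbove).charpoly.IsRoot z := by
  set C := B.submatrix i.succAbove i.succAbove
  intro z₀ hz₀ hroot
  obtain ⟨s, hs, hmax⟩ := Set.exists_max_image {x | C.charpoly.IsRoot x} id
    (finite_setOfPred_isRoot C.charpoly_monic.ne_zero) ⟨z₀, hroot⟩
  refine (B.charpoly_monic.eval_pos_of_forall_ge fun y hy => h y ?_).not_ge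
    (charpoly_eval_nonpos_of_isGreatest_submatrix hB ⟨hs, hmax⟩ fun z hz =>
      hres z fun y hy hy₀ => (hz.trans_le hy).not_ge (hmax y hy₀))
  exact hz₀.trans ((hmax z₀ hroot).trans hy)

theorem IsNonneg.inv_scalar_sub {m : ℕ} {B : Matrix (Fin m) (Fin m) ℝ} (hB : B.IsNonneg) {u : ℝ}
    (h : ∀ z, u ≤ z → ¬ B.charpoly.IsRoot z) : (scalar (Fin m) u - B)⁻¹.IsNonneg := by
  induction m generalizing u with
  | zero => exact fun p => p.elim0
  | succ m ih =>
    have hC := forall_ge_not_isRoot_submatrix_of_isNonneg_inv hB 0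
      (fun _ => ih (hB.submatrix _ _)) h
    have hCu := (B.submatrix _ _).charpoly_monic.eval_pos_of_forall_ge hC
    have hBu := B.charpoly_monic.eval_pos_of_forall_ge h
    rw [charpoly_eval_eq_mul_schurCompl B 0 hCu.ne'] at hBu
    refine isNonneg_inv_of_schurCompl_pos ?_ ?_ (fun q => ?_) (fun p => ?_)
      (pos_of_mul_pos_right hBu hCu.le)
    · rw [submatrix_scalar_sub, ← eval_charpoly]; exact hCu.ne'.isUnit
    · rw [submatrix_scalar_sub]; exact ih (hB.submatrix _ _) hC
    · rw [sub_apply, scalar_apply, diagonal_apply_ne _ (Fin.succAbove_ne 0 q).symm, zero_sub,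
        neg_nonpos]
      exact hB _ _
    · rw [sub_apply, scalar_apply, diagonal_apply_ne _ (Fin.succAbove_ne 0 p), zero_sub,
        neg_nonpos]
      exact hB _ _

theorem IsNonneg.forall_ge_not_isRoot_submatrix {B : Matrix (Fin (m + 1)) (Fin (m + 1)) ℝ}
    (hB : B.IsNonneg) (i : Fin (m + 1)) {t : ℝ} (h : ∀ z, t ≤ z → ¬ B.charpoly.IsRoot z) :
    ∀ z, t ≤ z → ¬ (B.submatrix i.succAbove i.succAbove).charpoly.IsRoot z :=
  forall_ge_not_isRoot_submatrix_of_isNonneg_inv hB i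
    (fun _ => (hB.submatrix _ _).inv_scalar_sub) h

theorem IsNonneg.strictMonoOn_schurCompl_scalar_sub {B : Matrix (Fin (m + 1)) (Fin (m + 1)) ℝ}
    (hB : B.IsNonneg) (i : Fin (m + 1)) {t : ℝ}
    (hC : ∀ z, t ≤ z → ¬ (B.submatrix i.succAbove i.succAbove).charpoly.IsRoot z) :
    StrictMonoOn (fun u => schurCompl (scalar _ u - B) i) (Set.Ici t) := by
  set C := B.submatrix i.succAbove i.succAbove
  have hunit : ∀ u, t ≤ u → IsUnit (scalar (Fin m) u - C).det := fun u hu => by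
    rw [← eval_charpoly, isUnit_iff_ne_zero]; exact hC u hu
  have hres : ∀ u, t ≤ u → (scalar (Fin m) u - C)⁻¹.IsNonneg := fun u hu =>
    (hB.submatrix _ _).inv_scalar_sub fun z hz => hC z (hu.trans hz)
  intro u₁ hu₁ u₂ hu₂ hlt
  have hcoupling : 0 ≤ (fun q => B i (i.succAbove q)) ⬝ᵥ
      (((scalar (Fin m) u₁ - C)⁻¹ - (scalar (Fin m) u₂ - C)⁻¹) *ᵥ
        fun p => B (i.succAbove p) i) := by
    rw [inv_scalar_sub_sub_inv_scalar_sub C (hunit u₁ hu₁) (hunit u₂ hu₂), smul_mulVec,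
      dotProduct_smul, smul_eq_mul]
    exact mul_nonneg (sub_nonneg.2 hlt.le) (dotProduct_nonneg_of_nonneg (fun q => hB _ _)
      (((hres u₁ hu₁).mul (hres u₂ hu₂)).mulVec_nonneg fun p => hB _ _))
  simp only [schurCompl_scalar_sub]
  rw [sub_mulVec, dotProduct_sub] at hcoupling
  linarith

theorem IsNonneg.eq_of_isRoot_charpoly {B : Matrix (Fin (m + 1)) (Fin (m + 1)) ℝ}
    (hB : B.IsNonneg) (i : Fin (m + 1)) {t : ℝ}
    (hC : ∀ z, t ≤ z → ¬ (B.submatrix i.succAbove i.succAbove).charpoly.IsRoot z)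
    {u₁ u₂ : ℝ} (hu₁ : t ≤ u₁) (hu₂ : t ≤ u₂) (h₁ : B.charpoly.IsRoot u₁)
    (h₂ : B.charpoly.IsRoot u₂) : u₁ = u₂ := by
  have hzero : ∀ u, t ≤ u → B.charpoly.IsRoot u → schurCompl (scalar _ u - B) i = 0 := by
    intro u hu hroot
    have h := charpoly_eval_eq_mul_schurCompl B i (hC u hu)
    rw [hroot.eq_zero, eq_comm, mul_eq_zero] at h
    exact h.resolve_left (hC u hu)
  exact (hB.strictMonoOn_schurCompl_scalar_sub i hC).injOn hu₁ hu₂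
    ((hzero u₁ hu₁ h₁).trans (hzero u₂ hu₂ h₂).symm)

theorem IsNonneg.exists_eigenvector_nonneg {B : Matrix (Fin m) (Fin m) ℝ} (hB : B.IsNonneg)
    {r : ℝ} (hr : IsGreatest {x | B.charpoly.IsRoot x} r) :
    ∃ w, w ≠ 0 ∧ 0 ≤ w ∧ B *ᵥ w = r • w := by
  obtain ⟨e, N, hN, hN₀, hNr⟩ := exists_adjugate_charmatrix_eq_pow_smul B hr.1
  have hadj : ∀ u, r < u → (adjugate (scalar (Fin m) u - B)).IsNonneg := by
    intro u hu
    have hno : ∀ z, u ≤ z → ¬ B.charpoly.IsRoot z := fun z hz h => (hu.trans_le hz).not_ge (hr.2 h)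
    have hdet := B.charpoly_monic.eval_pos_of_forall_ge hno
    rw [eval_charpoly] at hdet
    rw [← one_smul ℝ (adjugate _), ← Ring.mul_inverse_cancel _ hdet.ne'.isUnit, mul_smul,
      ← inv_def]
    exact fun p q => mul_nonneg hdet.le (hB.inv_scalar_sub hno p q)
  have hNnn : (N.map (eval r)).IsNonneg := fun p q => by
    refine le_of_forall_gt_of_continuous continuous_const (N p q).continuous fun u hu => ?_
    have h := hadj u hu p q
    rw [← mapMatrix_evalRingHom_charmatrix, ← RingHom.map_adjugate, hN] at h
    simp only [RingHom.mapMatrix_apply, map_apply, smul_apply, smul_eq_mul, coe_evalRingHom,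
      eval_mul, eval_pow, eval_sub, eval_X, eval_C] at h
    exact nonneg_of_mul_nonneg_right h (pow_pos (sub_pos.2 hu) e)
  obtain ⟨p₀, q₀, hpq₀⟩ : ∃ p q, N.map (eval r) p q ≠ 0 := by
    by_contra! h
    exact hN₀ (ext h)
  refine ⟨fun p => N.map (eval r) p q₀, fun h => hpq₀ (congrFun h p₀), fun p => hNnn p q₀, ?_⟩
  have hcol : (scalar (Fin m) r - B) *ᵥ (fun p => N.map (eval r) p q₀) = 0 :=
    funext fun p => congrFun (congrFun hNr p) q₀
  rw [sub_mulVec, scalar_apply, ← smul_one_eq_diagonal, smul_mulVec, one_mulVec,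
    sub_eq_zero] at hcol
  exact hcol.symm

theorem _root_.MatIrred.transpose {n : ℕ} {M : Matrix (Fin n) (Fin n) ℝ} (h : MatIrred M) :
    MatIrred Mᵀ :=
  fun i j => (h j i).imp fun k hk => by rwa [← transpose_pow, transpose_apply]

theorem _root_.MatIrred.pos_of_eigenvector {n : ℕ} {M : Matrix (Fin n) (Fin n) ℝ}
    (hirr : MatIrred M) (hM : M.IsNonneg) {w : Fin n → ℝ} (hw : w ≠ 0) (hw₀ : 0 ≤ w) {c : ℝ}
    (hwc : M *ᵥ w = c • w) (p : Fin n) : 0 < w p := by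
  obtain ⟨q, hq⟩ : ∃ q, 0 < w q := by
    by_contra! h
    exact hw (funext fun q => le_antisymm (h q) (hw₀ q))
  obtain ⟨k, hk⟩ := hirr p q
  have hpow : ∀ j, (M ^ j) *ᵥ w = c ^ j • w := fun j => by
    induction j with
    | zero => simp
    | succ j ih => rw [pow_succ, ← mulVec_mulVec, hwc, mulVec_smul, ih, smul_smul, pow_succ']
  have h := (hM.pow k).single_le_mulVec hw₀ p q
  rw [hpow, Pi.smul_apply, smul_eq_mul] at h
  by_contra! h0
  rw [le_antisymm h0 (hw₀ p), mul_zero] at h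
  exact (mul_pos hk hq).not_ge h

theorem IsNonneg.lt_of_eigenvector_submatrix {B : Matrix (Fin (m + 1)) (Fin (m + 1)) ℝ}
    (hB : B.IsNonneg) (hirr : MatIrred B) {y : Fin (m + 1) → ℝ} (hy : y ≠ 0) (hy₀ : 0 ≤ y)
    {ρ : ℝ} (hyρ : Bᵀ *ᵥ y = ρ • y) (i : Fin (m + 1)) {w : Fin m → ℝ} (hw : w ≠ 0) (hw₀ : 0 ≤ w)
    {μ : ℝ} (hwμ : B.submatrix i.succAbove i.succAbove *ᵥ w = μ • w) : μ < ρ := by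
  set x : Fin (m + 1) → ℝ := Fin.insertNth i 0 w
  have hx₀ : 0 ≤ x := fun p =>
    Fin.succAboveCases i (by simp [x]) (fun j => by simpa [x] using hw₀ j) p
  have hx : x ≠ 0 := fun h => hw (funext fun j => by simpa [x] using congrFun h (i.succAbove j))
  have hBx : ∀ j, (B *ᵥ x) (i.succAbove j) = μ * x (i.succAbove j) := fun j => by
    simp [x, mulVec_insertNth_zero_succAbove, hwμ]
  have hdot : y i * (B *ᵥ x) i = (ρ - μ) * (y ⬝ᵥ x) := by
    have : y ⬝ᵥ (B *ᵥ x - μ • x) = y i * (B *ᵥ x) i := by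
      simp [dotProduct, Fin.sum_univ_succAbove _ i, hBx, x]
    rw [← this, dotProduct_sub, dotProduct_mulVec, ← mulVec_transpose, hyρ, smul_dotProduct,
      dotProduct_smul, smul_eq_mul, smul_eq_mul, sub_mul]
  by_contra! hle
  have hyi := hirr.transpose.pos_of_eigenvector hB.transpose hy hy₀ hyρ i
  have hBxi : (B *ᵥ x) i = 0 := by
    refine le_antisymm ?_ (hB.mulVec_nonneg hx₀ i)
    have : (ρ - μ) * (y ⬝ᵥ x) ≤ 0 :=
      mul_nonpos_of_nonpos_of_nonneg (sub_nonpos.2 hle) (dotProduct_nonneg_of_nonneg hy₀ hx₀)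
    nlinarith
  have hBx' : B *ᵥ x = μ • x := funext fun p =>
    Fin.succAboveCases i (by simp [hBxi, x]) (fun j => by simp [hBx]) p
  simpa [x] using hirr.pos_of_eigenvector hB hx hx₀ hBx' i

end Matrix

/-- Hall–Porsching separation theorem: any real eigenvalue `λ_p ≠ λ₁(A)` of a
nonnegative matrix `A` satisfies `λ_p ≤ λ₁(A_i) ≤ λ₁(A)` for every principal
`(n-1)×(n-1)` minor `A_i`, with `λ₁(A_i) < λ₁(A)` when `A` is irreducible. -/
theorem stmt_15 (n : ℕ) (A : Matrix (Fin (n + 1)) (Fin (n + 1)) ℝ)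
    (hA : ∀ i j, 0 ≤ A i j)
    (lam1 : ℝ)
    (hlam1 : IsGreatest {μ : ℝ | ∃ v : Fin (n + 1) → ℝ, v ≠ 0 ∧ A.mulVec v = μ • v} lam1)
    (lamp : ℝ)
    (hp : ∃ v : Fin (n + 1) → ℝ, v ≠ 0 ∧ A.mulVec v = lamp • v)
    (hne : lamp ≠ lam1)
    (i : Fin (n + 1)) (mu : ℝ)
    (hmu : IsGreatest
      {μ : ℝ | ∃ v : Fin n → ℝ, v ≠ 0 ∧
        (A.submatrix i.succAbove i.succAbove).mulVec v = μ • v} mu) :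
    lamp ≤ mu ∧ mu ≤ lam1 ∧ (MatIrred A → mu < lam1) := by
  have hA : A.IsNonneg := hA
  simp only [exists_mulVec_eq_smul_iff_isRoot] at hlam1 hp hmu
  refine ⟨le_of_not_gt fun h => hne ?_, le_of_not_gt fun h => ?_, fun hirr => ?_⟩
  · exact hA.eq_of_isRoot_charpoly i (fun z hz hz₀ => (h.trans_le hz).not_ge (hmu.2 hz₀))
      le_rfl (hlam1.2 hp) hp hlam1.1
  · exact hA.forall_ge_not_isRoot_submatrix i
      (fun z hz hz₀ => (h.trans_le hz).not_ge (hlam1.2 hz₀)) mu le_rfl hmu.1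
  · obtain ⟨w, hw, hw₀, hwμ⟩ := (hA.submatrix _ _).exists_eigenvector_nonneg hmu
    obtain ⟨y, hy, hy₀, hyl⟩ := hA.transpose.exists_eigenvector_nonneg (r := lam1)
      (by rwa [charpoly_transpose])
    exact hA.lt_of_eigenvector_submatrix hirr hy hy₀ hyl i hw hw₀ hwμ
end
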